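/- Let L₁, L₂, L₃ be complete lattices and f : L₁ × L₂ × L₃ → L₁ × L₂ × L₃ monotone with components f₁, f₂, f₃. Then the first component of the least fixed point of f equals μx. f₁(x, μy. f₂(x, y, μz. f₃(x,y,z)), μz. f₃(x, μy. f₂(x,y,z), z)). -/
import Mathlib


/-- Least fixed point of `g` (Knaster-Tarski for monotone `g`). -/
def lfp {α : Type*} [CompleteLattice α] (g : α → α) : α := sInf {x | g x ≤ x}

lemma lfp_le {α : Type*} [CompleteLattice α] {g : α → α} {a : α} (h : g a ≤ a) : lfp g ≤ a :=
  sInf_le h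

lemma map_lfp {α : Type*} [CompleteLattice α] {g : α → α} (hg : Monotone g) :
    g (lfp g) = lfp g := by
  have h1 : g (lfp g) ≤ lfp g := le_sInf fun b hb => (hg (sInf_le hb)).trans hb
  exact le_antisymm h1 (lfp_le (hg h1))

lemma lfp_mono {α : Type*} [CompleteLattice α] {g h : α → α} (hgh : ∀ a, g a ≤ h a) :
    lfp g ≤ lfp h :=
  le_sInf fun b hb => sInf_le (le_trans (hgh b) hb)

section Pair

variable {β γ : Type*} [CompleteLattice β] [CompleteLattice γ]
  (g : β × γ → β × γ)

lemma Zmono (hg : Monotone g) :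
    Monotone (fun y => lfp (fun z => (g (y, z)).2)) := by
  intro y y' h
  exact lfp_mono fun z => (hg (Prod.mk_le_mk.2 ⟨h, le_rfl⟩)).2

lemma Zinner_mono (hg : Monotone g) (y : β) : Monotone (fun z => (g (y, z)).2) :=
  fun _ _ h => (hg (Prod.mk_le_mk.2 ⟨le_rfl, h⟩)).2

lemma Omono (hg : Monotone g) :
    Monotone (fun y => (g (y, lfp (fun z => (g (y, z)).2))).1) := by
  intro y y' h
  exact (hg (Prod.mk_le_mk.2 ⟨h, Zmono g hg h⟩)).1

/-- Core Bekić lemma for pairs. -/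
lemma bekic_aux (hg : Monotone g) :
    lfp g = (lfp (fun y => (g (y, lfp (fun z => (g (y, z)).2))).1),
             lfp (fun z => (g (lfp (fun y => (g (y, lfp (fun z' => (g (y, z')).2))).1), z)).2)) := by
  set Z : β → γ := fun y => lfp (fun z => (g (y, z)).2) with hZ
  set b : β := lfp (fun y => (g (y, Z y)).1) with hb
  have hZb : lfp (fun z => (g (b, z)).2) = Z b := rfl
  -- fixed point equations
  have hbfix : (g (b, Z b)).1 = b := map_lfp (Omono g hg)
  have hZfix : ∀ y, (g (y, Z y)).2 = Z y := fun y => map_lfp (Zinner_mono g hg y)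
  have hpre : g (b, Z b) ≤ (b, Z b) := Prod.mk_le_mk.2 ⟨le_of_eq hbfix, le_of_eq (hZfix b)⟩
  refine le_antisymm (lfp_le hpre) ?_
  -- other direction
  have hp : g (lfp g) = lfp g := map_lfp hg
  set p := lfp g with hpdef
  have hp1 : (g (p.1, p.2)).1 = p.1 := by rw [Prod.mk.eta, hp]
  have hp2 : (g (p.1, p.2)).2 = p.2 := by rw [Prod.mk.eta, hp]
  have hZp : Z p.1 ≤ p.2 := lfp_le (le_of_eq hp2)
  have hbp : b ≤ p.1 := lfp_le (le_trans (hg (Prod.mk_le_mk.2 ⟨le_rfl, hZp⟩)).1 (le_of_eq hp1))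
  have hZbp : Z b ≤ p.2 := le_trans (Zmono g hg hbp) hZp
  exact Prod.mk_le_mk.2 ⟨hbp, hZbp⟩

end Pair

section Pair2

variable {β γ : Type*} [CompleteLattice β] [CompleteLattice γ]
  (g : β × γ → β × γ)

lemma swap_mono (hg : Monotone g) :
    Monotone (fun p : γ × β => ((g (p.2, p.1)).2, (g (p.2, p.1)).1)) := by
  intro p p' h
  have := hg (Prod.mk_le_mk.2 ⟨h.2, h.1⟩)
  exact Prod.mk_le_mk.2 ⟨this.2, this.1⟩

lemma lfp_swap (hg : Monotone g) :
    lfp (fun p : γ × β => ((g (p.2, p.1)).2, (g (p.2, p.1)).1)) = ((lfp g).2, (lfp g).1) := by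
  refine le_antisymm (lfp_le ?_) ?_
  · show ((g ((lfp g).1, (lfp g).2)).2, (g ((lfp g).1, (lfp g).2)).1) ≤ _
    rw [Prod.mk.eta, map_lfp hg]
  · set q := lfp (fun p : γ × β => ((g (p.2, p.1)).2, (g (p.2, p.1)).1)) with hq
    have hfix := map_lfp (swap_mono g hg)
    rw [← hq] at hfix
    have h1 : (g (q.2, q.1)).2 = q.1 := congrArg Prod.fst hfix
    have h2 : (g (q.2, q.1)).1 = q.2 := congrArg Prod.snd hfix
    have : g (q.2, q.1) = (q.2, q.1) := Prod.ext h2 h1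
    have hle : lfp g ≤ (q.2, q.1) := lfp_le (le_of_eq this)
    exact Prod.mk_le_mk.2 ⟨hle.2, hle.1⟩

lemma bekic_snd (hg : Monotone g) :
    (lfp g).2 = lfp (fun z => (g (lfp (fun y => (g (y, z)).1), z)).2) := by
  have h := bekic_aux _ (swap_mono g hg)
  rw [lfp_swap g hg] at h
  exact congrArg Prod.fst h

end Pair2

theorem bekic_triple_fst {L₁ L₂ L₃ : Type*} [CompleteLattice L₁] [CompleteLattice L₂]
    [CompleteLattice L₃]
    (f : L₁ × L₂ × L₃ → L₁ × L₂ × L₃) (hf : Monotone f) :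
    (lfp f).1 =
      lfp (fun x => (f (x,
        lfp (fun y => (f (x, y, lfp (fun z => (f (x, y, z)).2.2))).2.1),
        lfp (fun z => (f (x, lfp (fun y => (f (x, y, z)).2.1), z)).2.2))).1) := by
  have h1 : (lfp f).1 = lfp (fun x => (f (x, lfp (fun m : L₂ × L₃ => (f (x, m)).2))).1) :=
    congrArg Prod.fst (bekic_aux f hf)
  rw [h1]
  congr 1
  funext x
  have hgx : Monotone (fun m : L₂ × L₃ => (f (x, m)).2) :=
    fun m m' h => (hf (Prod.mk_le_mk.2 ⟨le_rfl, h⟩)).2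
  have hfst := congrArg Prod.fst (bekic_aux _ hgx)
  have hsnd := bekic_snd _ hgx
  have hZ : lfp (fun m : L₂ × L₃ => (f (x, m)).2) =
      (lfp (fun y => (f (x, y, lfp (fun z => (f (x, y, z)).2.2))).2.1),
       lfp (fun z => (f (x, lfp (fun y => (f (x, y, z)).2.1), z)).2.2)) :=
    Prod.ext hfst hsnd
  rw [hZ]
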